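/- Let e₀, e₁ be real numbers with e₀ > −1, e₁ > −1 and e₀ + e₁ ∉ ℤ. Then a polynomial P ∈ ℂ[z] lies in the image T₁(ℂ[z]) if and only if μ(P) = ∫₀¹ P(x)·x^{e₀}·(1−x)^{e₁} dx = 0. Moreover, writing P = T₁(R) + Λ with R ∈ ℂ[z] and Λ ∈ ℂ (such a decomposition exists and is unique), one has μ(P) = Λ·μ(1). -/

import Mathlib

/-!
`μ ∘ T₁ = 0` because `T₁(R)·w = (x(1−x)·R·w)′` for the weight `w = x^{e₀}(1−x)^{e₁}`; on monomials
this is the Beta recurrence `a·B(a, b) = (a + b)·B(a + 1, b)`, since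
`T₁(zⁿ) = (e₀+n+1)·zⁿ − (e₀+e₁+n+2)·zⁿ⁺¹` and `μ(zⁿ) = B(e₀+n+1, e₁+1)`.
As `e₀ + e₁ + n + 2 > 0`, the same formula expresses `zⁿ⁺¹` through `zⁿ` modulo the image of `T₁`,
so `ℂ[z] = T₁(ℂ[z]) + ℂ`; and `T₁` raises the degree of a nonzero polynomial by exactly one, so
`T₁(ℂ[z]) ∩ ℂ = 0`. Applying `μ` to `P = T₁(R) + Λ` gives `μ(P) = Λ·μ(1)`, and
`μ(1) = B(e₀+1, e₁+1) ≠ 0`.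
-/

open Polynomial

/-- The operator `T₁(R) = z(1−z)·R′ + (e₀+1 − (e₀+e₁+2)z)·R` (the case `J = 1` of `T`),
acting on complex polynomials, with real parameters `e₀, e₁`. -/
noncomputable def T1 (e₀ e₁ : ℝ) (R : ℂ[X]) : ℂ[X] :=
  X * (1 - X) * derivative R +
    (C ((e₀ : ℂ) + 1) - C ((e₀ : ℂ) + e₁ + 2) * X) * R

/-- The linear form `μ(P) = ∫₀¹ P(x)·x^{e₀}·(1−x)^{e₁} dx` on complex polynomials. -/
noncomputable def mu (e₀ e₁ : ℝ) (P : ℂ[X]) : ℂ :=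
  ∫ x in (0:ℝ)..1, P.eval (x : ℂ) * ((x ^ e₀ * (1 - x) ^ e₁ : ℝ) : ℂ)

open MeasureTheory

theorem Polynomial.coeff_X_mul_derivative {R : Type*} [Semiring R] (p : R[X]) (n : ℕ) :
    (X * derivative p).coeff n = n * p.coeff n := by
  cases n with
  | zero => simp
  | succ n => rw [coeff_X_mul, coeff_derivative, ← Nat.cast_succ, Nat.cast_comm]

section Algebraic

variable (e₀ e₁ : ℝ)

theorem T1_add (R S : ℂ[X]) : T1 e₀ e₁ (R + S) = T1 e₀ e₁ R + T1 e₀ e₁ S := by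
  simp only [T1, derivative_add]; ring

theorem T1_sub (R S : ℂ[X]) : T1 e₀ e₁ (R - S) = T1 e₀ e₁ R - T1 e₀ e₁ S := by
  simp only [T1, derivative_sub]; ring

theorem T1_C_mul (c : ℂ) (R : ℂ[X]) : T1 e₀ e₁ (C c * R) = C c * T1 e₀ e₁ R := by
  simp only [T1, derivative_C_mul]; ring

theorem T1_zero : T1 e₀ e₁ 0 = 0 := by simp [T1]

theorem T1_X_pow (n : ℕ) :
    T1 e₀ e₁ (X ^ n) =
      C ((e₀ : ℂ) + n + 1) * X ^ n - C ((e₀ : ℂ) + e₁ + n + 2) * X ^ (n + 1) := by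
  cases n with
  | zero => simp [T1]
  | succ n => simp only [T1, derivative_X_pow, map_add, map_natCast]; push_cast; ring

theorem coeff_T1_natDegree_succ (D : ℂ[X]) :
    (T1 e₀ e₁ D).coeff (D.natDegree + 1) =
      -((e₀ : ℂ) + e₁ + D.natDegree + 2) * D.leadingCoeff := by
  have hT : T1 e₀ e₁ D = X * derivative D - X * (X * derivative D) + C ((e₀ : ℂ) + 1) * D
      - C ((e₀ : ℂ) + e₁ + 2) * (X * D) := by
    simp only [T1]; ring
  have htop : D.coeff (D.natDegree + 1) = 0 := coeff_eq_zero_of_natDegree_lt (Nat.lt_succ_self _)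
  rw [hT, coeff_sub, coeff_add, coeff_sub, coeff_X_mul_derivative]
  simp only [coeff_C_mul, coeff_X_mul, coeff_X_mul_derivative, htop, leadingCoeff]
  ring

variable {e₀ e₁}

theorem T1_ne_C (hs : ∀ n : ℕ, (e₀ : ℂ) + e₁ + n + 2 ≠ 0) {D : ℂ[X]} (hD : D ≠ 0) (k : ℂ) :
    T1 e₀ e₁ D ≠ C k := by
  intro h
  have htop := coeff_T1_natDegree_succ e₀ e₁ D
  rw [h, coeff_C_succ, eq_comm, neg_mul, neg_eq_zero] at htop
  exact mul_ne_zero (hs D.natDegree) (leadingCoeff_ne_zero.mpr hD) htop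

theorem eq_of_T1_add_C_eq (hs : ∀ n : ℕ, (e₀ : ℂ) + e₁ + n + 2 ≠ 0) {R S : ℂ[X]} {Λ Λ' : ℂ}
    (h : T1 e₀ e₁ R + C Λ = T1 e₀ e₁ S + C Λ') : R = S ∧ Λ = Λ' := by
  obtain rfl : R = S := by
    by_contra hRS
    refine T1_ne_C hs (sub_ne_zero_of_ne hRS) (Λ' - Λ) ?_
    rw [T1_sub, map_sub]
    linear_combination h
  exact ⟨rfl, C_injective (add_left_cancel h)⟩

theorem exists_X_pow_eq_T1_add_C (hs : ∀ n : ℕ, (e₀ : ℂ) + e₁ + n + 2 ≠ 0) (n : ℕ) :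
    ∃ R Λ, (X ^ n : ℂ[X]) = T1 e₀ e₁ R + C Λ := by
  induction n with
  | zero => exact ⟨0, 1, by simp [T1_zero]⟩
  | succ n ih =>
    obtain ⟨R, Λ, h⟩ := ih
    set s : ℂ := (e₀ : ℂ) + e₁ + n + 2
    set a : ℂ := (e₀ : ℂ) + n + 1
    have hs' : C s⁻¹ * C s = 1 := by rw [← C_mul, inv_mul_cancel₀ (hs n), C_1]
    refine ⟨C (s⁻¹ * a) * R - C s⁻¹ * X ^ n, s⁻¹ * a * Λ, ?_⟩
    rw [T1_sub, T1_C_mul, T1_C_mul, T1_X_pow]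
    simp only [C_mul]
    linear_combination (-X ^ (n + 1)) * hs' + C s⁻¹ * C a * h

theorem exists_eq_T1_add_C (hs : ∀ n : ℕ, (e₀ : ℂ) + e₁ + n + 2 ≠ 0) (P : ℂ[X]) :
    ∃ R Λ, P = T1 e₀ e₁ R + C Λ := by
  induction P using Polynomial.induction_on' with
  | add P Q hP hQ =>
    obtain ⟨R, Λ, rfl⟩ := hP
    obtain ⟨S, Λ', rfl⟩ := hQ
    exact ⟨R + S, Λ + Λ', by rw [T1_add, C_add]; ring⟩
  | monomial n c =>
    obtain ⟨R, Λ, h⟩ := exists_X_pow_eq_T1_add_C hs n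
    exact ⟨C c * R, c * Λ, by rw [← C_mul_X_pow_eq_monomial, h, T1_C_mul, C_mul]; ring⟩

end Algebraic

theorem Complex.mul_betaIntegral_eq_add_mul_betaIntegral_add_one {a b : ℂ} (ha : 0 < a.re)
    (hb : 0 < b.re) : a * betaIntegral a b = (a + b) * betaIntegral (a + 1) b := by
  have ha₁ : 0 < (a + 1).re := by rw [add_re, one_re]; linarith
  have hab : 0 < (a + b).re := by rw [add_re]; linarith
  have hΓ : Gamma (a + b) ≠ 0 := Gamma_ne_zero_of_re_pos hab
  have ha₀ : a ≠ 0 := fun h => by simp [h] at ha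
  have hab₀ : a + b ≠ 0 := fun h => by simp [h] at hab
  rw [betaIntegral_eq_Gamma_mul_div _ _ ha hb, betaIntegral_eq_Gamma_mul_div _ _ ha₁ hb,
    add_right_comm, Gamma_add_one _ ha₀, Gamma_add_one _ hab₀]
  field_simp

section Analytic

variable {e₀ e₁ : ℝ}

-- The exponents are written `(e + 1) - 1` to match the integrand of `Complex.betaIntegral`.
theorem ofReal_weight_eq_cpow {x : ℝ} (hx : x ∈ Set.Ioc (0 : ℝ) 1) :
    ((x ^ e₀ * (1 - x) ^ e₁ : ℝ) : ℂ) =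
      (x : ℂ) ^ ((e₀ : ℂ) + 1 - 1) * (1 - (x : ℂ)) ^ ((e₁ : ℂ) + 1 - 1) := by
  rw [Complex.ofReal_mul, Complex.ofReal_cpow hx.1.le, Complex.ofReal_cpow (by linarith [hx.2])]
  push_cast
  ring_nf

theorem mu_C_mul (c : ℂ) (P : ℂ[X]) : mu e₀ e₁ (C c * P) = c * mu e₀ e₁ P := by
  simp only [mu, eval_mul, eval_C, mul_assoc]
  exact intervalIntegral.integral_const_mul c _

theorem intervalIntegrable_weight (h₀ : -1 < e₀) (h₁ : -1 < e₁) :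
    IntervalIntegrable (fun x : ℝ => ((x ^ e₀ * (1 - x) ^ e₁ : ℝ) : ℂ)) volume 0 1 := by
  have hB := Complex.betaIntegral_convergent (u := (e₀ : ℂ) + 1) (v := (e₁ : ℂ) + 1)
    (by simp; linarith) (by simp; linarith)
  rw [intervalIntegrable_iff] at hB ⊢
  refine hB.congr ?_
  rw [Set.uIoc_of_le zero_le_one]
  filter_upwards [ae_restrict_mem measurableSet_Ioc] with x hx
  exact (ofReal_weight_eq_cpow hx).symm

theorem intervalIntegrable_eval_mul_weight (h₀ : -1 < e₀) (h₁ : -1 < e₁) (P : ℂ[X]) :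
    IntervalIntegrable (fun x : ℝ => P.eval (x : ℂ) * ((x ^ e₀ * (1 - x) ^ e₁ : ℝ) : ℂ))
      volume 0 1 :=
  (intervalIntegrable_weight h₀ h₁).continuousOn_mul
    (P.continuous_aeval.comp Complex.continuous_ofReal).continuousOn

theorem mu_add (h₀ : -1 < e₀) (h₁ : -1 < e₁) (P Q : ℂ[X]) :
    mu e₀ e₁ (P + Q) = mu e₀ e₁ P + mu e₀ e₁ Q := by
  simp only [mu, eval_add, add_mul]
  exact intervalIntegral.integral_add (intervalIntegrable_eval_mul_weight h₀ h₁ P)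
    (intervalIntegrable_eval_mul_weight h₀ h₁ Q)

theorem mu_sub (h₀ : -1 < e₀) (h₁ : -1 < e₁) (P Q : ℂ[X]) :
    mu e₀ e₁ (P - Q) = mu e₀ e₁ P - mu e₀ e₁ Q := by
  simp only [mu, eval_sub, sub_mul]
  exact intervalIntegral.integral_sub (intervalIntegrable_eval_mul_weight h₀ h₁ P)
    (intervalIntegrable_eval_mul_weight h₀ h₁ Q)

theorem mu_X_pow (n : ℕ) :
    mu e₀ e₁ (X ^ n) = Complex.betaIntegral ((e₀ : ℂ) + n + 1) ((e₁ : ℂ) + 1) := by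
  refine intervalIntegral.integral_congr_ae (.of_forall fun x hx => ?_)
  rw [Set.uIoc_of_le zero_le_one] at hx
  have hx₀ : (x : ℂ) ≠ 0 := Complex.ofReal_ne_zero.mpr hx.1.ne'
  rw [ofReal_weight_eq_cpow hx, eval_pow, eval_X, ← Complex.cpow_natCast, ← mul_assoc,
    ← Complex.cpow_add _ _ hx₀]
  ring_nf

theorem mu_T1_X_pow (h₀ : -1 < e₀) (h₁ : -1 < e₁) (n : ℕ) : mu e₀ e₁ (T1 e₀ e₁ (X ^ n)) = 0 := by
  have ha : 0 < ((e₀ : ℂ) + n + 1).re := by simp; linarith [n.cast_nonneg (α := ℝ)]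
  have hb : 0 < ((e₁ : ℂ) + 1).re := by simp; linarith
  have hB := Complex.mul_betaIntegral_eq_add_mul_betaIntegral_add_one ha hb
  have hn : (e₀ : ℂ) + (n + 1 : ℕ) + 1 = (e₀ + n + 1) + 1 := by push_cast; ring
  rw [T1_X_pow, mu_sub h₀ h₁, mu_C_mul, mu_C_mul, mu_X_pow, mu_X_pow, hn]
  linear_combination hB

theorem mu_T1 (h₀ : -1 < e₀) (h₁ : -1 < e₁) (R : ℂ[X]) : mu e₀ e₁ (T1 e₀ e₁ R) = 0 := by
  induction R using Polynomial.induction_on' with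
  | add R S hR hS => rw [T1_add, mu_add h₀ h₁, hR, hS, add_zero]
  | monomial n c =>
    rw [← C_mul_X_pow_eq_monomial, T1_C_mul, mu_C_mul, mu_T1_X_pow h₀ h₁, mul_zero]

theorem mu_C (Λ : ℂ) : mu e₀ e₁ (C Λ) = Λ * mu e₀ e₁ 1 := by
  rw [← mu_C_mul, mul_one]

theorem mu_one_ne_zero (h₀ : -1 < e₀) (h₁ : -1 < e₁) : mu e₀ e₁ 1 ≠ 0 := by
  have ha : 0 < ((e₀ : ℂ) + (0 : ℕ) + 1).re := by simp; linarith
  have hb : 0 < ((e₁ : ℂ) + 1).re := by simp; linarith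
  rw [← pow_zero X, mu_X_pow, Complex.betaIntegral_eq_Gamma_mul_div _ _ ha hb]
  exact div_ne_zero (mul_ne_zero (Complex.Gamma_ne_zero_of_re_pos ha)
    (Complex.Gamma_ne_zero_of_re_pos hb)) (Complex.Gamma_ne_zero_of_re_pos (add_pos ha hb))

end Analytic

theorem stmt_11_general (e₀ e₁ : ℝ) (h₀ : -1 < e₀) (h₁ : -1 < e₁) (P : ℂ[X]) :
    ((∃ R : ℂ[X], P = T1 e₀ e₁ R) ↔ mu e₀ e₁ P = 0) ∧
    (∃! RΛ : ℂ[X] × ℂ, P = T1 e₀ e₁ RΛ.1 + C RΛ.2) ∧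
    (∀ (R : ℂ[X]) (Λ : ℂ), P = T1 e₀ e₁ R + C Λ →
      mu e₀ e₁ P = Λ * mu e₀ e₁ 1) := by
  have hs : ∀ n : ℕ, (e₀ : ℂ) + e₁ + n + 2 ≠ 0 := fun n h => by
    have : e₀ + e₁ + n + 2 = 0 := by exact_mod_cast h
    linarith [n.cast_nonneg (α := ℝ)]
  have hmu : ∀ (R : ℂ[X]) (Λ : ℂ), P = T1 e₀ e₁ R + C Λ → mu e₀ e₁ P = Λ * mu e₀ e₁ 1 := by
    rintro R Λ rfl
    rw [mu_add h₀ h₁, mu_T1 h₀ h₁, zero_add, mu_C]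
  obtain ⟨R₀, Λ₀, hP⟩ := exists_eq_T1_add_C hs P
  refine ⟨⟨?_, fun hP₀ => ?_⟩, ⟨(R₀, Λ₀), hP, fun RΛ h => ?_⟩, hmu⟩
  · rintro ⟨R, rfl⟩
    exact mu_T1 h₀ h₁ R
  · have hΛ : Λ₀ = 0 := by
      simpa [hP₀, mu_one_ne_zero h₀ h₁] using (hmu R₀ Λ₀ hP).symm
    exact ⟨R₀, by rw [hP, hΛ, C_0, add_zero]⟩
  · obtain ⟨hR, hΛ⟩ := eq_of_T1_add_C_eq hs (h.symm.trans hP)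
    exact Prod.ext hR hΛ

/-- For `e₀, e₁ > −1` with `e₀ + e₁ ∉ ℤ`: a polynomial `P` lies in the image of `T₁`
iff `μ(P) = 0`; moreover `P` decomposes uniquely as `P = T₁(R) + Λ` with `Λ ∈ ℂ`
constant, and for any such decomposition `μ(P) = Λ·μ(1)`. -/
theorem stmt_11 (e₀ e₁ : ℝ) (h₀ : -1 < e₀) (h₁ : -1 < e₁)
    (hsum : ∀ m : ℤ, (m : ℝ) ≠ e₀ + e₁) (P : ℂ[X]) :
    ((∃ R : ℂ[X], P = T1 e₀ e₁ R) ↔ mu e₀ e₁ P = 0) ∧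
    (∃! RΛ : ℂ[X] × ℂ, P = T1 e₀ e₁ RΛ.1 + C RΛ.2) ∧
    (∀ (R : ℂ[X]) (Λ : ℂ), P = T1 e₀ e₁ R + C Λ →
      mu e₀ e₁ P = Λ * mu e₀ e₁ 1) :=
  stmt_11_general e₀ e₁ h₀ h₁ P
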